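/- arXiv:2211.04156 — 2 statements merged into one kernel-verified Lean document; each statement's English description precedes it below -/
import Mathlib

section
/- Let X be a random variable on ℝ and X₁, X₂, … be i.i.d. copies of X. Suppose (aₙ), (bₙ) are real sequences with aₙ > 0 such that for every x ∈ ℝ, P(X > bₙ + aₙ x) → 0 and n·P(X > bₙ + aₙ x) → e^{−x} as n → ∞. Then for every x ∈ ℝ, P(maxᵢ≤ₙ Xᵢ ≤ bₙ + aₙ x) → exp(−e^{−x}). -/
open MeasureTheory ProbabilityTheory Filter Topology Real

/-!
By independence and identical distribution, `P(max_{i<n} X_i ≤ u_n) = (1 - p_n)^n` with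
`p_n = P(X > u_n)`, and `(1 - p_n)^n → exp(-L)` as soon as `n p_n → L`.
-/

lemma ProbabilityTheory.iIndepFun.measure_forall_lt_mem_eq_pow {Ω β : Type*}
    [MeasurableSpace Ω] [MeasurableSpace β] {μ : Measure Ω} {X : ℕ → Ω → β}
    (hmeas : ∀ i, Measurable (X i)) (hindep : iIndepFun X μ)
    (hident : ∀ i, μ.map (X i) = μ.map (X 0)) {s : Set β} (hs : MeasurableSet s) (n : ℕ) :
    μ {ω | ∀ i < n, X i ω ∈ s} = μ (X 0 ⁻¹' s) ^ n := by
  have hsame (i : ℕ) : μ (X i ⁻¹' s) = μ (X 0 ⁻¹' s) := by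
    rw [← Measure.map_apply (hmeas i) hs, hident i, Measure.map_apply (hmeas 0) hs]
  have hinter : {ω | ∀ i < n, X i ω ∈ s} = ⋂ i ∈ Finset.range n, X i ⁻¹' s := by
    ext ω
    simp
  rw [hinter, hindep.meas_biInter fun i _ => ⟨s, hs, rfl⟩,
    Finset.prod_congr rfl fun i _ => hsame i, Finset.prod_const, Finset.card_range]

lemma ProbabilityTheory.iIndepFun.prob_forall_lt_le_eq_one_sub_pow {Ω : Type*}
    [MeasurableSpace Ω] {μ : Measure Ω} [IsProbabilityMeasure μ] {X : ℕ → Ω → ℝ}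
    (hmeas : ∀ i, Measurable (X i)) (hindep : iIndepFun X μ)
    (hident : ∀ i, μ.map (X i) = μ.map (X 0)) (c : ℝ) (n : ℕ) :
    (μ {ω | ∀ i < n, X i ω ≤ c}).toReal = (1 - (μ {ω | c < X 0 ω}).toReal) ^ n := by
  have hcompl : X 0 ⁻¹' Set.Iic c = {ω | c < X 0 ω}ᶜ := by
    ext ω
    simp
  calc (μ {ω | ∀ i < n, X i ω ≤ c}).toReal = (μ (X 0 ⁻¹' Set.Iic c)).toReal ^ n := by
        rw [← ENNReal.toReal_pow,
          ← hindep.measure_forall_lt_mem_eq_pow hmeas hident measurableSet_Iic n]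
        rfl
    _ = (1 - (μ {ω | c < X 0 ω}).toReal) ^ n := by
        rw [hcompl, ← measureReal_def,
          probReal_compl_eq_one_sub (s := {ω | c < X 0 ω}) (hmeas 0 measurableSet_Ioi),
          measureReal_def]

theorem stmt_6_general {Ω : Type*} [MeasurableSpace Ω] (μ : Measure Ω) [IsProbabilityMeasure μ]
    (X : ℕ → Ω → ℝ) (hmeas : ∀ i, Measurable (X i))
    (hindep : iIndepFun X μ)
    (hident : ∀ i, μ.map (X i) = μ.map (X 0))
    (a b : ℕ → ℝ)
    (h1 : ∀ x : ℝ,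
      Tendsto (fun n : ℕ => (n : ℝ) * (μ {ω | b n + a n * x < X 0 ω}).toReal) atTop
        (nhds (Real.exp (-x)))) :
    ∀ x : ℝ,
      Tendsto (fun n : ℕ => (μ {ω | ∀ i < n, X i ω ≤ b n + a n * x}).toReal) atTop
        (nhds (Real.exp (-Real.exp (-x)))) := by
  intro x
  simp_rw [hindep.prob_forall_lt_le_eq_one_sub_pow hmeas hident, sub_eq_add_neg]
  exact tendsto_one_add_pow_exp_of_tendsto (by simpa using (h1 x).neg)

theorem stmt_6 {Ω : Type*} [MeasurableSpace Ω] (μ : Measure Ω) [IsProbabilityMeasure μ]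
    (X : ℕ → Ω → ℝ) (hmeas : ∀ i, Measurable (X i))
    (hindep : iIndepFun X μ)
    (hident : ∀ i, μ.map (X i) = μ.map (X 0))
    (a b : ℕ → ℝ) (ha : ∀ n, 0 < a n)
    (h0 : ∀ x : ℝ,
      Tendsto (fun n : ℕ => (μ {ω | b n + a n * x < X 0 ω}).toReal) atTop (nhds 0))
    (h1 : ∀ x : ℝ,
      Tendsto (fun n : ℕ => (n : ℝ) * (μ {ω | b n + a n * x < X 0 ω}).toReal) atTop
        (nhds (Real.exp (-x)))) :
    ∀ x : ℝ,
      Tendsto (fun n : ℕ => (μ {ω | ∀ i < n, X i ω ≤ b n + a n * x}).toReal) atTop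
        (nhds (Real.exp (-Real.exp (-x)))) :=
  stmt_6_general μ X hmeas hindep hident a b h1
end

section
/- Let H ∈ (0,1), β > H, c > 0, with t₀, A, t̃₀ as above, and τ = 2(1−H/β). Suppose (Tₙ) satisfies Tₙ = t₀(2A² log n)^{1/(2(β−H))}(1 + εₙ) with εₙ·√(log n) → x₁ ∈ ℝ. Then (Tₙ^H √(2 log n) − c Tₙ^β − (2A² log n)^{1/τ}) / (2A² log n)^{1/τ} → 0 as n → ∞. -/
/-!
With `L = 2 A² log n` and `u = 1 + εₙ` we have `Tₙ = t₀ L^{1/(2(β-H))} u`, and since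
`√(2 log n) = L^{1/2} / A` and `H/(2(β-H)) + 1/2 = β/(2(β-H)) = 1/τ`, both `Tₙ^H √(2 log n)` and
`c Tₙ^β` are exact multiples of `L^{1/τ}`. The ratio is therefore
`A⁻¹ t₀^H u^H - c t₀^β u^β - 1`, which tends to `A⁻¹ t₀^H - c t₀^β - 1 = 0` because `εₙ → 0`
and `t₀` is chosen so that `A⁻¹ t₀^H = 1 + c t₀^β`.
-/

open Real Filter Topology

theorem tendsto_zero_of_tendsto_mul_atTop {α : Type*} {l : Filter α} {f g : α → ℝ} {x : ℝ}
    (hfg : Tendsto (fun a => f a * g a) l (𝓝 x)) (hg : Tendsto g l atTop) :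
    Tendsto f l (𝓝 0) :=
  (hfg.div_atTop hg).congr' <| by
    filter_upwards [hg.eventually_gt_atTop 0] with a ha
    exact mul_div_cancel_right₀ _ ha.ne'

theorem tendsto_sqrt_log_natCast_atTop : Tendsto (fun n : ℕ => √(log n)) atTop atTop :=
  tendsto_sqrt_atTop.comp (tendsto_log_atTop.comp tendsto_natCast_atTop_atTop)

theorem tendsto_mul_rpow_sub_mul_rpow {α : Type*} {l : Filter α} {u : α → ℝ}
    (hu : Tendsto u l (𝓝 1)) (a b p q : ℝ) :
    Tendsto (fun i => a * u i ^ p - b * u i ^ q) l (𝓝 (a - b)) := by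
  simpa using ((hu.rpow_const (p := p) (.inl one_ne_zero)).const_mul a).sub
    ((hu.rpow_const (p := q) (.inl one_ne_zero)).const_mul b)

section Constants

variable {H β c t₀ A : ℝ}

theorem mul_rpow_eq_div_of_eq_rpow (hβ : β ≠ 0) (hc : c ≠ 0) (hx : 0 ≤ H / (c * (β - H)))
    (ht₀ : t₀ = (H / (c * (β - H))) ^ (1 / β)) : c * t₀ ^ β = H / (β - H) := by
  rw [ht₀, ← rpow_mul hx, one_div_mul_cancel hβ, rpow_one]
  field_simp

theorem rpow_eq_mul_one_add_mul_rpow (hβ : β ≠ 0) (hβH : H ≠ β) (hc : c ≠ 0)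
    (hx : 0 ≤ H / (c * (β - H))) (ht₀ : t₀ = (H / (c * (β - H))) ^ (1 / β))
    (hA : A = ((β - H) / β) * (H / (c * (β - H))) ^ (H / β)) :
    t₀ ^ H = A * (1 + c * t₀ ^ β) := by
  have : β - H ≠ 0 := sub_ne_zero.mpr hβH.symm
  rw [mul_rpow_eq_div_of_eq_rpow hβ hc hx ht₀, ht₀, ← rpow_mul hx, hA, one_div_mul_eq_div]
  field_simp
  ring

end Constants

theorem rpow_mul_sqrt_sub_div_eq {H β c t₀ A l u : ℝ} (hβ : H ≠ β) (ht₀ : 0 ≤ t₀) (hA : 0 < A)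
    (hl : 0 < l) (hu : 0 ≤ u) :
    ((t₀ * (2 * A ^ 2 * l) ^ (1 / (2 * (β - H))) * u) ^ H * √(2 * l)
        - c * (t₀ * (2 * A ^ 2 * l) ^ (1 / (2 * (β - H))) * u) ^ β
        - (2 * A ^ 2 * l) ^ (β / (2 * (β - H)))) / (2 * A ^ 2 * l) ^ (β / (2 * (β - H)))
      = t₀ ^ H / A * u ^ H - c * t₀ ^ β * u ^ β - 1 := by
  set s := 1 / (2 * (β - H))
  set L := 2 * A ^ 2 * l with hL
  have hL0 : 0 < L := by positivity
  have hsqrt : √(2 * l) = L ^ (1 / 2 : ℝ) / A := by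
    rw [← sqrt_eq_rpow, hL, show 2 * A ^ 2 * l = A ^ 2 * (2 * l) by ring,
      sqrt_mul (sq_nonneg A), sqrt_sq hA.le]
    field_simp
  have hsβ : s * β = β / (2 * (β - H)) := by ring
  have hexp : L ^ (β / (2 * (β - H))) = L ^ (s * H) * L ^ (1 / 2 : ℝ) := by
    have : β - H ≠ 0 := sub_ne_zero.mpr hβ.symm
    rw [← rpow_add hL0]
    congr 1
    simp only [s]
    field_simp
    ring
  have hpow (r : ℝ) : (t₀ * L ^ s * u) ^ r = t₀ ^ r * L ^ (s * r) * u ^ r := by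
    rw [mul_rpow (by positivity) hu, mul_rpow ht₀ (by positivity), ← rpow_mul hL0.le]
  rw [hpow, hpow, hsqrt, hsβ, hexp]
  have := rpow_pos_of_pos hL0 (s * H)
  have := rpow_pos_of_pos hL0 (1 / 2)
  field_simp

theorem stmt_12_general (H β c τ x₁ : ℝ) (hH0 : 0 < H) (hβ : H < β) (hc : 0 < c)
    (t₀ A : ℝ)
    (ht₀ : t₀ = (H / (c * (β - H))) ^ (1 / β))
    (hA : A = ((β - H) / β) * (H / (c * (β - H))) ^ (H / β))
    (hτ : τ = 2 * (1 - H / β))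
    (T ε : ℕ → ℝ)
    (hT : ∀ n : ℕ, T n = t₀ * (2 * A ^ 2 * Real.log n) ^ (1 / (2 * (β - H))) * (1 + ε n))
    (hε : Tendsto (fun n : ℕ => ε n * Real.sqrt (Real.log n)) atTop (nhds x₁)) :
    Tendsto
      (fun n : ℕ =>
        ((T n) ^ H * Real.sqrt (2 * Real.log n) - c * (T n) ^ β
            - (2 * A ^ 2 * Real.log n) ^ (1 / τ)) /
          (2 * A ^ 2 * Real.log n) ^ (1 / τ))
      atTop (nhds 0) := by
  have hβH : 0 < β - H := sub_pos.mpr hβ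
  have hβ0 : 0 < β := hH0.trans hβ
  have hx : 0 < H / (c * (β - H)) := by positivity
  have ht₀0 : 0 < t₀ := ht₀ ▸ rpow_pos_of_pos hx _
  have hA0 : 0 < A := by rw [hA]; positivity
  have hτ' : 1 / τ = β / (2 * (β - H)) := by rw [hτ]; field_simp
  have hε0 : Tendsto ε atTop (𝓝 0) :=
    tendsto_zero_of_tendsto_mul_atTop hε tendsto_sqrt_log_natCast_atTop
  have hlim := (tendsto_mul_rpow_sub_mul_rpow (by simpa using hε0.const_add 1)
    (t₀ ^ H / A) (c * t₀ ^ β) H β).sub_const 1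
  have hzero : t₀ ^ H / A - c * t₀ ^ β - 1 = 0 := by
    rw [rpow_eq_mul_one_add_mul_rpow hβ0.ne' hβ.ne hc.ne' hx.le ht₀ hA]
    field_simp
    ring
  refine (hzero ▸ hlim).congr' ?_
  filter_upwards [eventually_gt_atTop 1, hε0.eventually (Ioi_mem_nhds neg_one_lt_zero)]
    with n hn hεn
  have hl : 0 < log n := log_pos (by exact_mod_cast hn)
  rw [hT n, hτ', rpow_mul_sqrt_sub_div_eq hβ.ne ht₀0.le hA0 hl (by linarith)]

theorem stmt_12 (H β c τ x₁ : ℝ) (hH0 : 0 < H) (hH1 : H < 1) (hβ : H < β) (hc : 0 < c)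
    (t₀ A : ℝ)
    (ht₀ : t₀ = (H / (c * (β - H))) ^ (1 / β))
    (hA : A = ((β - H) / β) * (H / (c * (β - H))) ^ (H / β))
    (hτ : τ = 2 * (1 - H / β))
    (T ε : ℕ → ℝ)
    (hT : ∀ n : ℕ, T n = t₀ * (2 * A ^ 2 * Real.log n) ^ (1 / (2 * (β - H))) * (1 + ε n))
    (hε : Tendsto (fun n : ℕ => ε n * Real.sqrt (Real.log n)) atTop (nhds x₁)) :
    Tendsto
      (fun n : ℕ =>
        ((T n) ^ H * Real.sqrt (2 * Real.log n) - c * (T n) ^ β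
            - (2 * A ^ 2 * Real.log n) ^ (1 / τ)) /
          (2 * A ^ 2 * Real.log n) ^ (1 / τ))
      atTop (nhds 0) :=
  stmt_12_general H β c τ x₁ hH0 hβ hc t₀ A ht₀ hA hτ T ε hT hε
end
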